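/- arXiv:cs/0505086 — 2 statements merged into one kernel-verified Lean document; each statement's English description precedes it below -/
import Mathlib

section
/- Let T₁ and T₂ be 𝒜-trees with 𝒜(T₁) = 𝒜(T₂) whose cluster representations satisfy: for every A ∈ 𝒜(T₁), the smallest member of 𝒞_𝒜(T₁) containing A equals the smallest member of 𝒞_𝒜(T₂) containing A; and for every X ∈ 𝒞_𝒜(T₁) and Y ∈ 𝒞_𝒜(T₂), if X ∩ Y ≠ ∅ then X ⊆ Y or Y ⊆ X. Then the join T_{1,2} of T₁ and T₂ is an 𝒜-tree, and the canonical maps f₁ : V(T₁) → V(T_{1,2}) and f₂ : V(T₂) → V(T_{1,2}) are weak topological embeddings. -/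
/-!
Common framework: rooted labeled trees ("𝒜-trees") following Llabrés–Rocha–Rosselló–Valiente.

A `PreTree α V` is the raw data of a directed graph on (a finite subset of) `V` together with
a partial labeling of its nodes by labels in `α`.  The predicate `PreTree.IsATree` asserts that
this data is a finite rooted tree (the root reaches every node by a unique directed path),
that the labeling is injective, and that every leaf is labeled.
-/

structure PreTree (α : Type) (V : Type) where
  nodes : Set V
  arc : V → V → Prop
  label : V → Option α

namespace PreTree

variable {α V W : Type}

/-- There is a directed path from `u` to `v` (possibly trivial). -/
def path (T : PreTree α V) (u v : V) : Prop := Relation.ReflTransGen T.arc u v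

/-- There is a non-trivial directed path (length ≥ 1) from `u` to `v`. -/
def pathNT (T : PreTree α V) (u v : V) : Prop := Relation.TransGen T.arc u v

/-- `𝒜(T)`: the set of labels of all nodes of `T`. -/
def labelSet (T : PreTree α V) : Set α := {a | ∃ v, T.label v = some a}

/-- `𝒜_T(v)`: the cluster of `v`, i.e. the set of labels of all descendants of `v`
(including `v` itself). -/
def cluster (T : PreTree α V) (v : V) : Set α := {a | ∃ w, T.path v w ∧ T.label w = some a}

/-- `𝒞_𝒜(T)`: the cluster representation of `T`. -/
def clusterRep (T : PreTree α V) : Set (Set α) := {C | ∃ v ∈ T.nodes, T.cluster v = C}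

/-- A leaf is a node without children. -/
def IsLeaf (T : PreTree α V) (v : V) : Prop := v ∈ T.nodes ∧ ∀ w, ¬ T.arc v w

/-- `ℒ(T)`: the set of labels of the leaves of `T`. -/
def leafLabels (T : PreTree α V) : Set α := {a | ∃ v, T.IsLeaf v ∧ T.label v = some a}

/-- A node is elementary when it has exactly one child. -/
def IsElementary (T : PreTree α V) (v : V) : Prop := ∃! w, T.arc v w

/-- `T` is an 𝒜-tree: a finite rooted tree (every node reachable from the root by a unique
directed path, which is captured by unique parents, acyclicity and reachability from a root)
with an injective partial labeling such that every leaf is labeled. -/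
structure IsATree (T : PreTree α V) : Prop where
  finite_nodes : T.nodes.Finite
  arc_mem_left : ∀ {u v : V}, T.arc u v → u ∈ T.nodes
  arc_mem_right : ∀ {u v : V}, T.arc u v → v ∈ T.nodes
  parent_unique : ∀ {u v w : V}, T.arc u w → T.arc v w → u = v
  acyclic : ∀ {u v : V}, T.arc u v → ¬ T.path v u
  rooted : T.nodes.Nonempty → ∃ r ∈ T.nodes, ∀ v ∈ T.nodes, T.path r v
  label_mem : ∀ {v : V} {a : α}, T.label v = some a → v ∈ T.nodes
  label_inj : ∀ {u v : V} {a : α}, T.label u = some a → T.label v = some a → u = v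
  leaf_labeled : ∀ v ∈ T.nodes, (∀ w, ¬ T.arc v w) → ∃ a, T.label v = some a

/-- A semi-labeled tree over `𝒜` is an 𝒜-tree all of whose elementary nodes are labeled. -/
def IsSemiLabeled (T : PreTree α V) : Prop :=
  T.IsATree ∧ ∀ v ∈ T.nodes, T.IsElementary v → ∃ a, T.label v = some a

open Classical in
/-- The restriction `T|X`: the subtree of `T` induced on the nodes whose cluster meets `X`,
keeping exactly the labels that belong to `X`. -/
noncomputable def restrict (T : PreTree α V) (X : Set α) : PreTree α V where
  nodes := {v | v ∈ T.nodes ∧ (T.cluster v ∩ X).Nonempty}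
  arc u v := T.arc u v ∧ (T.cluster u ∩ X).Nonempty ∧ (T.cluster v ∩ X).Nonempty
  label v := if (∃ a ∈ X, T.label v = some a) then T.label v else none

/-- A weak topological embedding `f : S → T`: an injective map on nodes which preserves labels
and preserves and reflects directed paths. -/
def IsWTE (S : PreTree α V) (T : PreTree α W) (f : V → W) : Prop :=
  (∀ v ∈ S.nodes, f v ∈ T.nodes) ∧
  (∀ u ∈ S.nodes, ∀ v ∈ S.nodes, f u = f v → u = v) ∧
  (∀ (v : V) (a : α), S.label v = some a → T.label (f v) = some a) ∧
  (∀ u ∈ S.nodes, ∀ v ∈ S.nodes, (S.path u v ↔ T.path (f u) (f v)))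

/-- Two 𝒜-trees are ancestrally compatible when they admit weak topological embeddings into
a same 𝒜-tree. -/
def AncCompat (T₁ : PreTree α V) (T₂ : PreTree α W) : Prop :=
  ∃ (U : Type) (T : PreTree α U), T.IsATree ∧ (∃ f, IsWTE T₁ T f) ∧ (∃ g, IsWTE T₂ T g)

/-- `m` is the most recent common ancestor of `x` and `y` in `T`. -/
def IsMRCA (T : PreTree α V) (x y m : V) : Prop :=
  T.path m x ∧ T.path m y ∧ ∀ n, T.path n x → T.path n y → T.path n m

/-- Local compatibility: condition (C1) on pairs of common labels and condition (C2)
on triples of common labels. -/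
def LocallyCompatible (T₁ : PreTree α V) (T₂ : PreTree α W) : Prop :=
  (∀ (a b : α) (x₁ y₁ : V) (x₂ y₂ : W),
      T₁.label x₁ = some a → T₁.label y₁ = some b →
      T₂.label x₂ = some a → T₂.label y₂ = some b →
      (T₁.path x₁ y₁ ↔ T₂.path x₂ y₂)) ∧
  (∀ (a b c : α) (va₁ vb₁ vc₁ m₁ m₁' : V) (va₂ vb₂ vc₂ m₂ m₂' : W),
      T₁.label va₁ = some a → T₁.label vb₁ = some b → T₁.label vc₁ = some c →
      T₂.label va₂ = some a → T₂.label vb₂ = some b → T₂.label vc₂ = some c →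
      IsMRCA T₁ vb₁ vc₁ m₁ → IsMRCA T₁ va₁ vb₁ m₁' →
      IsMRCA T₂ va₂ vb₂ m₂ → IsMRCA T₂ vb₂ vc₂ m₂' →
      T₁.pathNT m₁ m₁' → ¬ T₂.pathNT m₂ m₂')

/-- `T` ancestrally displays `S`. -/
def Displays (T : PreTree α W) (S : PreTree α V) : Prop :=
  S.labelSet ⊆ T.labelSet ∧
  (∀ (a b : α) (x y : V) (x' y' : W),
      S.label x = some a → S.label y = some b →
      T.label x' = some a → T.label y' = some b →
      (S.path x y ↔ T.path x' y')) ∧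
  S.clusterRep ⊆ (T.restrict S.labelSet).clusterRep

/-- An unlabeled elementary node. -/
def ElemUnlab (T : PreTree α V) (v : V) : Prop := T.label v = none ∧ T.IsElementary v

/-- The semi-labeled tree obtained from `S` by removing its unlabeled elementary nodes and
replacing by single arcs the maximal paths all of whose intermediate nodes are unlabeled
and elementary. -/
def contract (S : PreTree α V) : PreTree α V where
  nodes := {v | v ∈ S.nodes ∧ ¬ ElemUnlab S v}
  arc u v := (u ∈ S.nodes ∧ ¬ ElemUnlab S u) ∧ (v ∈ S.nodes ∧ ¬ ElemUnlab S v) ∧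
    ∃ l : List V, List.Chain' S.arc (u :: (l ++ [v])) ∧ ∀ m ∈ l, ElemUnlab S m
  label := S.label

/-- `X` is the smallest member of the family `R` containing the label `a`. -/
def SmallestContaining (R : Set (Set α)) (a : α) (X : Set α) : Prop :=
  X ∈ R ∧ a ∈ X ∧ ∀ Y ∈ R, a ∈ Y → X ⊆ Y

/-- `m_{ℓ,Y}`: the number of nodes of `T` whose cluster is `Y`. -/
noncomputable def mcount (T : PreTree α V) (Y : Set α) : ℕ :=
  {v | v ∈ T.nodes ∧ T.cluster v = Y}.ncard

/-- `𝒞 = 𝒞_𝒜(T₁) ∪ 𝒞_𝒜(T₂)`. -/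
def joinC (T₁ : PreTree α V) (T₂ : PreTree α W) : Set (Set α) :=
  T₁.clusterRep ∪ T₂.clusterRep

/-- `n_Y = max (m_{1,Y}, m_{2,Y})`. -/
noncomputable def joinN (T₁ : PreTree α V) (T₂ : PreTree α W) (Y : Set α) : ℕ :=
  max (mcount T₁ Y) (mcount T₂ Y)

open Classical in
/-- The join `T_{1,2}` of two 𝒜-trees with the same label set: nodes are the pairs
`w_{Y,j} = (Y, j)` with `Y ∈ 𝒞` and `1 ≤ j ≤ n_Y`, with the chain arcs `(w_{Y,j}, w_{Y,j-1})`
and the arcs `(w_{Y,1}, w_{Z,n_Z})` for `Z ⊊ Y` maximal in `𝒞`, and `w_{Y,1}` labeled `A`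
exactly when `Y = (⋃ {Z ∈ 𝒞 ∣ Z ⊊ Y}) ⊔ {A}`. -/
noncomputable def join (T₁ : PreTree α V) (T₂ : PreTree α W) : PreTree α (Set α × ℕ) where
  nodes := {p | p.1 ∈ joinC T₁ T₂ ∧ 1 ≤ p.2 ∧ p.2 ≤ joinN T₁ T₂ p.1}
  arc p q := p.1 ∈ joinC T₁ T₂ ∧ q.1 ∈ joinC T₁ T₂ ∧
    ((q.1 = p.1 ∧ p.2 = q.2 + 1 ∧ 1 ≤ q.2 ∧ p.2 ≤ joinN T₁ T₂ p.1) ∨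
     (p.2 = 1 ∧ q.1 ⊂ p.1 ∧ q.2 = joinN T₁ T₂ q.1 ∧ 1 ≤ q.2 ∧
       ¬ ∃ Z ∈ joinC T₁ T₂, q.1 ⊂ Z ∧ Z ⊂ p.1))
  label p :=
    if h : p.2 = 1 ∧ p.1 ∈ joinC T₁ T₂ ∧
        ∃ a : α, a ∉ ⋃₀ {Z ∈ joinC T₁ T₂ | Z ⊂ p.1} ∧
          p.1 = (⋃₀ {Z ∈ joinC T₁ T₂ | Z ⊂ p.1}) ∪ {a}
    then some h.2.2.choose else none

/-- The canonical map `f_ℓ : V(T_ℓ) → V(T_{1,2})`, sending the `i`-th node (from the bottom)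
of the chain of nodes of `T` with cluster `Y` to `w_{Y,i}`. -/
noncomputable def joinMap (T : PreTree α V) (v : V) : Set α × ℕ :=
  (T.cluster v, {u | u ∈ T.nodes ∧ T.cluster u = T.cluster v ∧ T.pathNT v u}.ncard + 1)

end PreTree

/-!
The members of `𝒞 = 𝒞_𝒜(T₁) ∪ 𝒞_𝒜(T₂)` form a finite laminar family: two clusters of one tree
are nested or disjoint, and the hypothesis on `X ∩ Y` handles mixed pairs. Order the pairs
`(Y, j)` lexicographically, with `⊆` on the first coordinate. Every arc of the join strictly
decreases this order, and conversely a node reaches every smaller node: go down the chain of `Y`,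
then jump to a maximal proper sub-member and recurse. So directed paths of the join are exactly
this order. In each `T_ℓ`, directed paths are ordered the same way by (cluster, position in
the chain of nodes with that cluster), which is what `f_ℓ` records. Laminarity gives unique
parents and an injective labelling. Because the cluster of a node labelled `A` is the smallest
member of `𝒞` containing `A`, `f_ℓ` preserves labels.
-/

namespace PreTree

variable {α V W : Type}

def IsLaminar (𝒞 : Set (Set α)) : Prop :=
  ∀ X ∈ 𝒞, ∀ Y ∈ 𝒞, (X ∩ Y).Nonempty → X ⊆ Y ∨ Y ⊆ X

theorem SmallestContaining.eq {R : Set (Set α)} {a : α} {X Y : Set α}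
    (hX : SmallestContaining R a X) (hY : SmallestContaining R a Y) : X = Y :=
  (hX.2.2 Y hY.1 hY.2.1).antisymm (hY.2.2 X hX.1 hX.2.1)

theorem SmallestContaining.union {R R' : Set (Set α)} {a : α} {X : Set α}
    (h : SmallestContaining R a X) (h' : SmallestContaining R' a X) :
    SmallestContaining (R ∪ R') a X :=
  ⟨Or.inl h.1, h.2.1, fun _ hY => hY.elim (h.2.2 _) (h'.2.2 _)⟩

section Rank

variable {β : Type} [Preorder β] {T : PreTree α V} {f : V → β}

theorem path_le_of_arc_lt (hf : ∀ u v, T.arc u v → f v < f u) {u v : V} (h : T.path u v) :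
    f v ≤ f u := by
  induction h with
  | refl => exact le_rfl
  | tail _ hbc ih => exact (hf _ _ hbc).le.trans ih

theorem not_path_of_arc_of_arc_lt (hf : ∀ u v, T.arc u v → f v < f u) {u v : V}
    (h : T.arc u v) : ¬ T.path v u :=
  fun hp => (hf u v h).not_ge (path_le_of_arc_lt hf hp)

end Rank

section Cluster

variable {T : PreTree α V} {u v w : V} {a : α}

theorem cluster_anti (h : T.path u v) : T.cluster v ⊆ T.cluster u :=
  fun _ ⟨w, hw, hl⟩ => ⟨w, h.trans hw, hl⟩

theorem cluster_subset_labelSet (v : V) : T.cluster v ⊆ T.labelSet :=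
  fun _ ⟨w, _, hl⟩ => ⟨w, hl⟩

theorem mem_cluster_of_label (h : T.label v = some a) : a ∈ T.cluster v :=
  ⟨v, .refl, h⟩

theorem cluster_eq_singleton_of_isLeaf (hw : T.IsLeaf w) (ha : T.label w = some a) :
    T.cluster w = {a} := by
  refine (Set.singleton_subset_iff.2 (mem_cluster_of_label ha)).antisymm' ?_
  rintro b ⟨x, hx, hb⟩
  obtain rfl : x = w := by
    rcases Relation.ReflTransGen.cases_head hx with h | ⟨c, hc, -⟩
    · exact h.symm
    · exact absurd hc (hw.2 c)
  exact Option.some_injective _ (hb.symm.trans ha)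

end Cluster

def sameClusterBelow (T : PreTree α V) (v : V) : Set V :=
  {u | u ∈ T.nodes ∧ T.cluster u = T.cluster v ∧ T.pathNT v u}

theorem joinMap_eq (T : PreTree α V) (v : V) :
    joinMap T v = (T.cluster v, (T.sameClusterBelow v).ncard + 1) := rfl

namespace IsATree

variable {T : PreTree α V} (hT : T.IsATree) {u v w : V} {a : α}
include hT

theorem not_path_of_pathNT (h : T.pathNT u v) : ¬ T.path v u := fun hp => by
  obtain ⟨c, hc, hcv⟩ := Relation.TransGen.head'_iff.1 h
  exact hT.acyclic hc (hcv.trans hp)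

theorem pathNT_irrefl (v : V) : ¬ T.pathNT v v :=
  fun h => hT.not_path_of_pathNT h .refl

theorem eq_of_path_of_path (h : T.path u v) (h' : T.path v u) : u = v := by
  rcases Relation.reflTransGen_iff_eq_or_transGen.1 h with rfl | h
  · rfl
  · exact absurd h' (hT.not_path_of_pathNT h)

theorem path_or_path_of_path (hu : T.path u w) (hv : T.path v w) :
    T.path u v ∨ T.path v u := by
  induction hu with
  | refl => exact Or.inr hv
  | @tail m w hm harc ih =>
    rcases Relation.ReflTransGen.cases_tail hv with rfl | ⟨m', hm', harc'⟩
    · exact Or.inl (hm.tail harc)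
    · exact ih (hT.parent_unique harc harc' ▸ hm')

theorem path_or_path_of_cluster_inter (h : (T.cluster u ∩ T.cluster v).Nonempty) :
    T.path u v ∨ T.path v u := by
  obtain ⟨a, ⟨w₁, hw₁, hl₁⟩, ⟨w₂, hw₂, hl₂⟩⟩ := h
  exact hT.path_or_path_of_path hw₁ (hT.label_inj hl₂ hl₁ ▸ hw₂)

theorem wellFoundedOn_pathNT_flip : T.nodes.WellFoundedOn (fun x y => T.pathNT y x) :=
  haveI : IsStrictOrder V (fun x y => T.pathNT y x) :=
    { irrefl := hT.pathNT_irrefl, trans := fun _ _ _ h h' => h'.trans h }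
  hT.finite_nodes.wellFoundedOn

theorem exists_path_isLeaf (hv : v ∈ T.nodes) : ∃ w, T.path v w ∧ T.IsLeaf w := by
  refine hT.wellFoundedOn_pathNT_flip.induction hv (P := fun v => ∃ w, T.path v w ∧ T.IsLeaf w)
    fun v hv ih => ?_
  by_cases hchild : ∃ c, T.arc v c
  · obtain ⟨c, hc⟩ := hchild
    obtain ⟨w, hcw, hw⟩ := ih c (hT.arc_mem_right hc) (.single hc)
    exact ⟨w, hcw.head hc, hw⟩
  · exact ⟨v, .refl, hv, fun c hc => hchild ⟨c, hc⟩⟩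

theorem exists_singleton_mem_clusterRep (hv : v ∈ T.nodes) :
    ∃ a ∈ T.cluster v, {a} ∈ T.clusterRep := by
  obtain ⟨w, hvw, hw⟩ := hT.exists_path_isLeaf hv
  obtain ⟨a, ha⟩ := hT.leaf_labeled w hw.1 hw.2
  exact ⟨a, cluster_anti hvw (mem_cluster_of_label ha), w, hw.1,
    cluster_eq_singleton_of_isLeaf hw ha⟩

theorem cluster_nonempty (hv : v ∈ T.nodes) : (T.cluster v).Nonempty :=
  let ⟨a, ha, _⟩ := hT.exists_singleton_mem_clusterRep hv
  ⟨a, ha⟩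

theorem clusterRep_finite : T.clusterRep.Finite :=
  (hT.finite_nodes.image T.cluster).subset fun _ ⟨v, hv, hC⟩ => ⟨v, hv, hC⟩

theorem isLaminar_clusterRep : IsLaminar T.clusterRep := by
  rintro _ ⟨u, -, rfl⟩ _ ⟨v, -, rfl⟩ h
  exact (hT.path_or_path_of_cluster_inter h).symm.imp cluster_anti cluster_anti

theorem labelSet_mem_clusterRep (hne : T.nodes.Nonempty) : T.labelSet ∈ T.clusterRep := by
  obtain ⟨r, hr, hroot⟩ := hT.rooted hne
  exact ⟨r, hr, (cluster_subset_labelSet r).antisymm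
    fun a ⟨w, hw⟩ => ⟨w, hroot w (hT.label_mem hw), hw⟩⟩

theorem smallestContaining_cluster (h : T.label v = some a) :
    SmallestContaining T.clusterRep a (T.cluster v) := by
  refine ⟨⟨v, hT.label_mem h, rfl⟩, mem_cluster_of_label h, ?_⟩
  rintro _ ⟨z, -, rfl⟩ ⟨w, hzw, hw⟩
  exact cluster_anti (hT.label_inj hw h ▸ hzw)

theorem cluster_eq_of_smallestContaining (h : T.label v = some a) {X : Set α}
    (hX : SmallestContaining T.clusterRep a X) : T.cluster v = X :=
  (hT.smallestContaining_cluster h).eq hX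

theorem cluster_subset_sUnion_union (h : T.label v = some a) :
    T.cluster v ⊆ ⋃₀ {Z ∈ T.clusterRep | Z ⊂ T.cluster v} ∪ {a} := by
  rintro b ⟨w, hvw, hb⟩
  rcases Relation.reflTransGen_iff_eq_or_transGen.1 hvw with rfl | hvw
  · exact Or.inr (Option.some_injective _ (hb.symm.trans h))
  obtain ⟨c, hc, hcw⟩ := Relation.TransGen.head'_iff.1 hvw
  have hac : a ∉ T.cluster c := fun ⟨x, hcx, hx⟩ => hT.acyclic hc (hT.label_inj hx h ▸ hcx)
  refine Or.inl ⟨T.cluster c, ⟨⟨c, hT.arc_mem_right hc, rfl⟩, ?_⟩, w, hcw, hb⟩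
  exact ssubset_of_subset_not_subset (cluster_anti (.single hc))
    fun hsub => hac (hsub (mem_cluster_of_label h))

theorem one_le_mcount {Y : Set α} (hY : Y ∈ T.clusterRep) : 1 ≤ mcount T Y := by
  obtain ⟨v, hv, rfl⟩ := hY
  exact (Set.ncard_pos (hT.finite_nodes.subset fun _ h => h.1)).2 ⟨v, hv, rfl⟩

theorem sameClusterBelow_finite (v : V) : (T.sameClusterBelow v).Finite :=
  hT.finite_nodes.subset fun _ h => h.1

theorem sameClusterBelow_eq_empty (h : T.label v = some a) : T.sameClusterBelow v = ∅ := by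
  refine Set.eq_empty_of_forall_notMem ?_
  rintro u ⟨-, hc, hvu⟩
  obtain ⟨w, huw, hw⟩ := hc ▸ mem_cluster_of_label h
  exact hT.not_path_of_pathNT hvu (hT.label_inj hw h ▸ huw)

theorem ncard_sameClusterBelow_add_one_le_mcount (hv : v ∈ T.nodes) :
    (T.sameClusterBelow v).ncard + 1 ≤ mcount T (T.cluster v) := by
  have hsub : insert v (T.sameClusterBelow v) ⊆ {u | u ∈ T.nodes ∧ T.cluster u = T.cluster v} := by
    rintro x (rfl | ⟨hx, hxv, -⟩)
    exacts [⟨hv, rfl⟩, ⟨hx, hxv⟩]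
  have := Set.ncard_le_ncard hsub (hT.finite_nodes.subset fun _ h => h.1)
  rwa [Set.ncard_insert_of_notMem (fun h => hT.pathNT_irrefl v h.2.2)
    (hT.sameClusterBelow_finite v)] at this

theorem ncard_sameClusterBelow_le (h : T.path u v) (hc : T.cluster u = T.cluster v) :
    (T.sameClusterBelow v).ncard ≤ (T.sameClusterBelow u).ncard :=
  Set.ncard_le_ncard
    (fun _ ⟨hx, hxv, hvx⟩ => ⟨hx, hxv.trans hc.symm, Relation.TransGen.trans_right h hvx⟩)
    (hT.sameClusterBelow_finite u)

theorem ncard_sameClusterBelow_lt (h : T.pathNT u v) (hc : T.cluster u = T.cluster v)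
    (hv : v ∈ T.nodes) : (T.sameClusterBelow v).ncard < (T.sameClusterBelow u).ncard := by
  have hsub : insert v (T.sameClusterBelow v) ⊆ T.sameClusterBelow u := by
    rintro x (rfl | ⟨hx, hxv, hvx⟩)
    exacts [⟨hv, hc.symm, h⟩, ⟨hx, hxv.trans hc.symm, h.trans hvx⟩]
  have := Set.ncard_le_ncard hsub (hT.sameClusterBelow_finite u)
  rw [Set.ncard_insert_of_notMem (fun h => hT.pathNT_irrefl v h.2.2)
    (hT.sameClusterBelow_finite v)] at this
  omega

theorem path_iff_toLex_joinMap_le (hu : u ∈ T.nodes) (hv : v ∈ T.nodes) :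
    T.path u v ↔ toLex (joinMap T v) ≤ toLex (joinMap T u) := by
  simp only [Prod.Lex.toLex_le_toLex', joinMap_eq, add_le_add_iff_right]
  refine ⟨fun h => ⟨cluster_anti h, fun hc => hT.ncard_sameClusterBelow_le h hc.symm⟩, ?_⟩
  rintro ⟨hsub, hidx⟩
  obtain ⟨a, ha⟩ := hT.cluster_nonempty hv
  rcases hT.path_or_path_of_cluster_inter ⟨a, hsub ha, ha⟩ with huv | hvu
  · exact huv
  rcases Relation.reflTransGen_iff_eq_or_transGen.1 hvu with rfl | hvu
  · exact .refl
  have hc := hsub.antisymm (cluster_anti hvu.to_reflTransGen)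
  exact absurd (hidx hc) (hT.ncard_sameClusterBelow_lt hvu hc hu).not_ge

theorem injOn_joinMap : Set.InjOn (joinMap T) T.nodes := fun _ hx _ hy he =>
  hT.eq_of_path_of_path ((hT.path_iff_toLex_joinMap_le hx hy).2 (he ▸ le_rfl))
    ((hT.path_iff_toLex_joinMap_le hy hx).2 (he ▸ le_rfl))

end IsATree

section Join

variable {T₁ : PreTree α V} {T₂ : PreTree α W} {p q : Set α × ℕ} {Y Z : Set α} {a : α}

theorem join_arc_lt (h : (join T₁ T₂).arc p q) : toLex q < toLex p := by
  obtain ⟨-, -, ⟨hq, hp, -, -⟩ | ⟨-, hqp, -⟩⟩ := h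
  · exact Prod.Lex.toLex_lt_toLex.2 (Or.inr ⟨hq, by omega⟩)
  · exact Prod.Lex.toLex_lt_toLex.2 (Or.inl hqp)

theorem join_path_le (h : (join T₁ T₂).path p q) : toLex q ≤ toLex p :=
  path_le_of_arc_lt (fun _ _ => join_arc_lt) h

theorem join_acyclic (h : (join T₁ T₂).arc p q) : ¬ (join T₁ T₂).path q p :=
  not_path_of_arc_of_arc_lt (fun _ _ => join_arc_lt) h

theorem join_path_chain (hY : Y ∈ joinC T₁ T₂) {i j : ℕ} (hj : 1 ≤ j) (hji : j ≤ i)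
    (hi : i ≤ joinN T₁ T₂ Y) : (join T₁ T₂).path (Y, i) (Y, j) := by
  induction i, hji using Nat.le_induction with
  | base => exact .refl
  | succ i hji ih =>
    exact .head (b := (Y, i)) ⟨hY, hY, Or.inl ⟨rfl, rfl, by omega, hi⟩⟩ (ih (by omega))

section Finite

variable (hfin : (joinC T₁ T₂).Finite) (hpos : ∀ {Y}, Y ∈ joinC T₁ T₂ → 1 ≤ joinN T₁ T₂ Y)
include hfin hpos

theorem join_exists_arc_of_ssubset (hY : Y ∈ joinC T₁ T₂) (hZ : Z ∈ joinC T₁ T₂) (hZY : Z ⊂ Y) :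
    ∃ Z' ∈ joinC T₁ T₂, Z ⊆ Z' ∧ Z' ⊂ Y ∧ (join T₁ T₂).arc (Y, 1) (Z', joinN T₁ T₂ Z') := by
  obtain ⟨Z', ⟨hZ'C, hZZ', hZ'Y⟩, hmax⟩ :=
    (hfin.subset fun _ h => h.1 : {Z' | Z' ∈ joinC T₁ T₂ ∧ Z ⊆ Z' ∧ Z' ⊂ Y}.Finite).exists_maximal
      ⟨Z, hZ, subset_rfl, hZY⟩
  refine ⟨Z', hZ'C, hZZ', hZ'Y, hY, hZ'C, Or.inr ⟨rfl, hZ'Y, rfl, hpos hZ'C, ?_⟩⟩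
  rintro ⟨Z'', hZ''C, hZ'Z'', hZ''Y⟩
  exact hZ'Z''.not_subset (hmax ⟨hZ''C, hZZ'.trans hZ'Z''.subset, hZ''Y⟩ hZ'Z''.subset)

theorem join_path_of_ssubset (hY : Y ∈ joinC T₁ T₂) (hZ : Z ∈ joinC T₁ T₂) (hZY : Z ⊂ Y) :
    (join T₁ T₂).path (Y, 1) (Z, joinN T₁ T₂ Z) := by
  refine (hfin.wellFoundedOn (r := (· < ·))).induction hY
    (P := fun Y => ∀ Z ∈ joinC T₁ T₂, Z ⊂ Y → (join T₁ T₂).path (Y, 1) (Z, joinN T₁ T₂ Z))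
    (fun Y hY ih Z hZ hZY => ?_) Z hZ hZY
  obtain ⟨Z', hZ'C, hZZ', hZ'Y, harc⟩ := join_exists_arc_of_ssubset hfin hpos hY hZ hZY
  rcases hZZ'.eq_or_ssubset with rfl | hZZ'
  · exact .single harc
  · exact .head harc ((join_path_chain hZ'C le_rfl (hpos hZ'C) le_rfl).trans
      (ih Z' hZ'C hZ'Y Z hZ hZZ'))

theorem join_path_of_toLex_le (hp : p ∈ (join T₁ T₂).nodes) (hq : q ∈ (join T₁ T₂).nodes)
    (h : toLex q ≤ toLex p) : (join T₁ T₂).path p q := by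
  obtain ⟨Y, i⟩ := p
  obtain ⟨Z, j⟩ := q
  obtain ⟨hY, hi, hiY⟩ := hp
  obtain ⟨hZ, hj, hjZ⟩ := hq
  rcases Prod.Lex.toLex_le_toLex.1 h with hZY | ⟨rfl, hji⟩
  · exact (join_path_chain hY le_rfl hi hiY).trans
      ((join_path_of_ssubset hfin hpos hY hZ hZY).trans (join_path_chain hZ hj hjZ le_rfl))
  · exact join_path_chain hY hj hji hiY

theorem join_path_iff (hp : p ∈ (join T₁ T₂).nodes) (hq : q ∈ (join T₁ T₂).nodes) :
    (join T₁ T₂).path p q ↔ toLex q ≤ toLex p :=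
  ⟨join_path_le, join_path_of_toLex_le hfin hpos hp hq⟩

end Finite

theorem join_label_eq_some_iff : (join T₁ T₂).label p = some a ↔
    p.2 = 1 ∧ p.1 ∈ joinC T₁ T₂ ∧ a ∉ ⋃₀ {Z ∈ joinC T₁ T₂ | Z ⊂ p.1} ∧
      p.1 = ⋃₀ {Z ∈ joinC T₁ T₂ | Z ⊂ p.1} ∪ {a} := by
  simp only [join]
  split_ifs with h
  · obtain ⟨hcU, hcY⟩ := h.2.2.choose_spec
    refine ⟨fun he => ?_, fun ⟨_, _, haU, haY⟩ => ?_⟩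
    · cases Option.some_injective _ he
      exact ⟨h.1, h.2.1, hcU, hcY⟩
    · -- both `a` and the chosen label are the unique element of `p.1` outside the union
      have ha : a ∈ p.1 := haY ▸ Or.inr rfl
      rw [hcY] at ha
      exact congrArg some (ha.resolve_left haU).symm
  · exact ⟨False.elim, fun ⟨h1, hC, haU, haY⟩ => h ⟨h1, hC, a, haU, haY⟩⟩

theorem join_label_of_smallestContaining (hY : SmallestContaining (joinC T₁ T₂) a Y)
    (hcover : Y ⊆ ⋃₀ {Z ∈ joinC T₁ T₂ | Z ⊂ Y} ∪ {a}) : (join T₁ T₂).label (Y, 1) = some a := by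
  obtain ⟨hYC, haY, hmin⟩ := hY
  refine join_label_eq_some_iff.2 ⟨rfl, hYC, ?_, hcover.antisymm ?_⟩
  · rintro ⟨Z, ⟨hZC, hZY⟩, haZ⟩
    exact hZY.not_subset (hmin Z hZC haZ)
  · rintro b (⟨Z, ⟨-, hZY⟩, hbZ⟩ | rfl)
    exacts [hZY.subset hbZ, haY]

theorem join_label_inj (hlam : IsLaminar (joinC T₁ T₂)) (hp : (join T₁ T₂).label p = some a)
    (hq : (join T₁ T₂).label q = some a) : p = q := by
  obtain ⟨hp1, hpC, hpU, hpY⟩ := join_label_eq_some_iff.1 hp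
  obtain ⟨hq1, hqC, hqU, hqY⟩ := join_label_eq_some_iff.1 hq
  have hap : a ∈ p.1 := hpY ▸ Or.inr rfl
  have haq : a ∈ q.1 := hqY ▸ Or.inr rfl
  refine Prod.ext ?_ (hp1.trans hq1.symm)
  rcases hlam _ hpC _ hqC ⟨a, hap, haq⟩ with h | h
  · exact h.eq_or_ssubset.resolve_right fun hpq => hqU ⟨p.1, ⟨hpC, hpq⟩, hap⟩
  · exact (h.eq_or_ssubset.resolve_right fun hqp => hpU ⟨q.1, ⟨hqC, hqp⟩, haq⟩).symm

theorem join_parent_unique (hlam : IsLaminar (joinC T₁ T₂))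
    (hne : ∀ Y ∈ joinC T₁ T₂, Y.Nonempty) {p p' : Set α × ℕ} (h : (join T₁ T₂).arc p q)
    (h' : (join T₁ T₂).arc p' q) : p = p' := by
  obtain ⟨hp, hq, ⟨e1, e2, -, e4⟩ | ⟨e1, e2, e3, -, e5⟩⟩ := h <;>
    obtain ⟨hp', -, ⟨f1, f2, -, f4⟩ | ⟨f1, f2, f3, -, f5⟩⟩ := h'
  · exact Prod.ext (e1.symm.trans f1) (by omega)
  · rw [← e1] at e4; omega
  · rw [← f1] at f4; omega
  · obtain ⟨b, hb⟩ := hne _ hq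
    refine Prod.ext ?_ (e1.trans f1.symm)
    rcases hlam _ hp _ hp' ⟨b, e2.subset hb, f2.subset hb⟩ with hs | hs
    · exact hs.eq_or_ssubset.resolve_right fun hlt => f5 ⟨p.1, hp, e2, hlt⟩
    · exact (hs.eq_or_ssubset.resolve_right fun hlt => e5 ⟨p'.1, hp', f2, hlt⟩).symm

theorem join_isATree (hfin : (joinC T₁ T₂).Finite)
    (hpos : ∀ {Y}, Y ∈ joinC T₁ T₂ → 1 ≤ joinN T₁ T₂ Y) (hlam : IsLaminar (joinC T₁ T₂))
    (hsing : ∀ Y ∈ joinC T₁ T₂, ∃ a ∈ Y, {a} ∈ joinC T₁ T₂)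
    (htop : (joinC T₁ T₂).Nonempty → ∃ X, IsGreatest (joinC T₁ T₂) X) :
    (join T₁ T₂).IsATree where
  finite_nodes := by
    refine (hfin.biUnion fun Y _ => (Set.finite_Icc 1 (joinN T₁ T₂ Y)).image (Y, ·)).subset ?_
    rintro ⟨Y, j⟩ ⟨hY, hj⟩
    exact Set.mem_biUnion hY ⟨j, hj, rfl⟩
  arc_mem_left := by
    rintro p q ⟨hp, -, ⟨-, h, h', h''⟩ | ⟨h, -⟩⟩
    · exact ⟨hp, by omega, h''⟩
    · exact ⟨hp, h.ge, h ▸ hpos hp⟩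
  arc_mem_right := by
    rintro p q ⟨-, hq, ⟨e, e', h, h'⟩ | ⟨-, -, h, h', -⟩⟩
    · exact ⟨hq, h, by rw [e]; omega⟩
    · exact ⟨hq, h', h.le⟩
  parent_unique := join_parent_unique hlam fun Y hY => let ⟨a, ha, _⟩ := hsing Y hY; ⟨a, ha⟩
  acyclic := join_acyclic
  rooted := by
    rintro ⟨p, hp, -⟩
    obtain ⟨X, hXC, hXub⟩ := htop ⟨p.1, hp⟩
    refine ⟨(X, joinN T₁ T₂ X), ⟨hXC, hpos hXC, le_rfl⟩, fun q hq => ?_⟩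
    refine join_path_of_toLex_le hfin hpos ⟨hXC, hpos hXC, le_rfl⟩ hq ?_
    exact Prod.Lex.toLex_le_toLex'.2 ⟨hXub hq.1, fun h : q.1 = X => h ▸ hq.2.2⟩
  label_mem := by
    intro p a h
    obtain ⟨h1, hC, -⟩ := join_label_eq_some_iff.1 h
    exact ⟨hC, h1.ge, h1 ▸ hpos hC⟩
  label_inj := join_label_inj hlam
  leaf_labeled := by
    rintro ⟨Y, j⟩ ⟨hY, hj, hjY⟩ hleaf
    obtain rfl : j = 1 := by
      by_contra hj1
      exact hleaf (Y, j - 1) ⟨hY, hY, Or.inl ⟨rfl, by omega, by omega, hjY⟩⟩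
    obtain ⟨a, haY, ha⟩ := hsing Y hY
    obtain rfl : Y = {a} := by
      refine ((Set.singleton_subset_iff.2 haY).eq_or_ssubset.resolve_right fun haY' => ?_).symm
      obtain ⟨Z', -, -, -, harc⟩ := join_exists_arc_of_ssubset hfin hpos hY ha haY'
      exact hleaf _ harc
    exact ⟨a, join_label_of_smallestContaining ⟨ha, rfl, fun _ _ => Set.singleton_subset_iff.2⟩
      Set.subset_union_right⟩

end Join

section OfTrees

variable {T₁ : PreTree α V} {T₂ : PreTree α W} (h₁ : T₁.IsATree) (h₂ : T₂.IsATree)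
include h₁ h₂

theorem joinC_finite : (joinC T₁ T₂).Finite :=
  h₁.clusterRep_finite.union h₂.clusterRep_finite

theorem one_le_joinN {Y : Set α} (hY : Y ∈ joinC T₁ T₂) : 1 ≤ joinN T₁ T₂ Y :=
  hY.elim (fun h => le_max_of_le_left (h₁.one_le_mcount h))
    (fun h => le_max_of_le_right (h₂.one_le_mcount h))

theorem isLaminar_joinC
    (hint : ∀ X ∈ T₁.clusterRep, ∀ Y ∈ T₂.clusterRep, (X ∩ Y).Nonempty → X ⊆ Y ∨ Y ⊆ X) :
    IsLaminar (joinC T₁ T₂) := by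
  rintro X (hX | hX) Y (hY | hY) hXY
  · exact h₁.isLaminar_clusterRep X hX Y hY hXY
  · exact hint X hX Y hY hXY
  · exact (hint Y hY X hX (Set.inter_comm X Y ▸ hXY)).symm
  · exact h₂.isLaminar_clusterRep X hX Y hY hXY

theorem exists_singleton_mem_joinC : ∀ Y ∈ joinC T₁ T₂, ∃ a ∈ Y, {a} ∈ joinC T₁ T₂ := by
  rintro _ (⟨v, hv, rfl⟩ | ⟨v, hv, rfl⟩)
  · obtain ⟨a, ha, hs⟩ := h₁.exists_singleton_mem_clusterRep hv
    exact ⟨a, ha, Or.inl hs⟩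
  · obtain ⟨a, ha, hs⟩ := h₂.exists_singleton_mem_clusterRep hv
    exact ⟨a, ha, Or.inr hs⟩

theorem isGreatest_labelSet_joinC (hl : T₁.labelSet = T₂.labelSet)
    (hne : (joinC T₁ T₂).Nonempty) : IsGreatest (joinC T₁ T₂) T₁.labelSet := by
  refine ⟨?_, ?_⟩
  · obtain ⟨_, ⟨v, hv, -⟩ | ⟨v, hv, -⟩⟩ := hne
    · exact Or.inl (h₁.labelSet_mem_clusterRep ⟨v, hv⟩)
    · exact Or.inr (hl ▸ h₂.labelSet_mem_clusterRep ⟨v, hv⟩)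
  · rintro _ (⟨v, -, rfl⟩ | ⟨v, -, rfl⟩)
    · exact cluster_subset_labelSet v
    · exact hl ▸ cluster_subset_labelSet v

theorem isATree_join (hl : T₁.labelSet = T₂.labelSet)
    (hint : ∀ X ∈ T₁.clusterRep, ∀ Y ∈ T₂.clusterRep, (X ∩ Y).Nonempty → X ⊆ Y ∨ Y ⊆ X) :
    (join T₁ T₂).IsATree :=
  join_isATree (joinC_finite h₁ h₂) (one_le_joinN h₁ h₂) (isLaminar_joinC h₁ h₂ hint)
    (exists_singleton_mem_joinC h₁ h₂) fun hne => ⟨_, isGreatest_labelSet_joinC h₁ h₂ hl hne⟩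

end OfTrees

theorem isWTE_joinMap {U : Type} {T : PreTree α U} {T₁ : PreTree α V} {T₂ : PreTree α W}
    (hT : T.IsATree) (hfin : (joinC T₁ T₂).Finite)
    (hpos : ∀ {Y}, Y ∈ joinC T₁ T₂ → 1 ≤ joinN T₁ T₂ Y) (hrep : T.clusterRep ⊆ joinC T₁ T₂)
    (hm : ∀ Y, mcount T Y ≤ joinN T₁ T₂ Y)
    (hsmall : ∀ v a, T.label v = some a → SmallestContaining (joinC T₁ T₂) a (T.cluster v)) :
    IsWTE T (join T₁ T₂) (joinMap T) := by
  have hmem : ∀ v ∈ T.nodes, joinMap T v ∈ (join T₁ T₂).nodes := fun v hv =>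
    ⟨hrep ⟨v, hv, rfl⟩, Nat.le_add_left 1 _,
      (hT.ncard_sameClusterBelow_add_one_le_mcount hv).trans (hm _)⟩
  refine ⟨hmem, hT.injOn_joinMap, fun v a hv => ?_, fun u hu v hv => ?_⟩
  · rw [joinMap_eq, hT.sameClusterBelow_eq_empty hv, Set.ncard_empty]
    refine join_label_of_smallestContaining (hsmall v a hv) ?_
    refine (hT.cluster_subset_sUnion_union hv).trans (Set.union_subset_union_left _ ?_)
    exact Set.sUnion_mono fun Z hZ => ⟨hrep hZ.1, hZ.2⟩
  · rw [hT.path_iff_toLex_joinMap_le hu hv, join_path_iff hfin hpos (hmem u hu) (hmem v hv)]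

end PreTree

/-- For 𝒜-trees with the same label set whose cluster representations satisfy
condition (iii), the join is an 𝒜-tree and the canonical maps are weak topological
embeddings. -/
theorem stmt15 {α V W : Type} (T₁ : PreTree α V) (T₂ : PreTree α W)
    (h₁ : T₁.IsATree) (h₂ : T₂.IsATree) (hl : T₁.labelSet = T₂.labelSet)
    (hsm : ∀ a ∈ T₁.labelSet, ∃ X : Set α,
        PreTree.SmallestContaining T₁.clusterRep a X ∧
        PreTree.SmallestContaining T₂.clusterRep a X)
    (hint : ∀ X ∈ T₁.clusterRep, ∀ Y ∈ T₂.clusterRep,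
        (X ∩ Y).Nonempty → X ⊆ Y ∨ Y ⊆ X) :
    (PreTree.join T₁ T₂).IsATree ∧
      PreTree.IsWTE T₁ (PreTree.join T₁ T₂) (PreTree.joinMap T₁) ∧
      PreTree.IsWTE T₂ (PreTree.join T₁ T₂) (PreTree.joinMap T₂) := by
  have hfin := PreTree.joinC_finite h₁ h₂
  refine ⟨PreTree.isATree_join h₁ h₂ hl hint, ?_, ?_⟩
  · refine PreTree.isWTE_joinMap h₁ hfin (PreTree.one_le_joinN h₁ h₂) Set.subset_union_left
      (fun _ => le_max_left _ _) fun v a hv => ?_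
    obtain ⟨X, hX₁, hX₂⟩ := hsm a ⟨v, hv⟩
    rw [h₁.cluster_eq_of_smallestContaining hv hX₁]
    exact hX₁.union hX₂
  · refine PreTree.isWTE_joinMap h₂ hfin (PreTree.one_le_joinN h₁ h₂) Set.subset_union_right
      (fun _ => le_max_right _ _) fun v a hv => ?_
    obtain ⟨X, hX₁, hX₂⟩ := hsm a (hl ▸ ⟨v, hv⟩)
    rw [h₂.cluster_eq_of_smallestContaining hv hX₂]
    exact hX₁.union hX₂
end

section
/- Let T₁ and T₂ be locally compatible 𝒜-trees and let A, B, C ∈ 𝒜(T₁) ∩ 𝒜(T₂). Suppose that in T₁ no two of the nodes v_A, v_B, v_C are connected by a directed path and that there is a non-trivial directed path v_{B,C} ⇝ v_{A,B} in T₁ (so that in T₁, v_{A,B} = v_{A,C} is a proper descendant of v_{B,C}). Then in T₂ no two of the nodes v_A, v_B, v_C are connected by a directed path, and either there is a non-trivial directed path v_{B,C} ⇝ v_{A,B} in T₂, or v_{A,B} = v_{A,C} = v_{B,C} in T₂. -/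
namespace PreTree

variable {α V : Type}

theorem aux_path_antisymm {T : PreTree α V} (hT : T.IsATree) {u v : V}
    (huv : T.path u v) (hvu : T.path v u) : u = v := by
  rcases huv.cases_head with rfl | ⟨w, harc, hwv⟩
  · rfl
  · exact absurd (hwv.trans hvu) (hT.acyclic harc)

theorem aux_pathNT_irrefl {T : PreTree α V} (hT : T.IsATree) {x : V} : ¬ T.pathNT x x := by
  intro h
  cases h with
  | single harc => exact hT.acyclic harc Relation.ReflTransGen.refl
  | tail hxw harc => exact hT.acyclic harc hxw.to_reflTransGen

theorem aux_path_comparable {T : PreTree α V} (hT : T.IsATree) {x v : V} (hx : T.path x v) :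
    ∀ y, T.path y v → T.path x y ∨ T.path y x := by
  induction hx with
  | refl => exact fun y hy => Or.inr hy
  | @tail w v hxw harc ih =>
    intro y hy
    rcases hy.cases_tail with rfl | ⟨w', hyw', harc'⟩
    · exact Or.inl (hxw.tail harc)
    · have hww : w' = w := hT.parent_unique harc' harc
      subst hww
      exact ih y hyw'

theorem aux_mrca_symm {T : PreTree α V} {x y m : V} (h : T.IsMRCA x y m) : T.IsMRCA y x m :=
  ⟨h.2.1, h.1, fun n h1 h2 => h.2.2 n h2 h1⟩

end PreTree

/-- If `T₁, T₂` are locally compatible, no two of `v_A, v_B, v_C` are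
path-connected in `T₁`, and there is a non-trivial path `v_{B,C} ⇝ v_{A,B}` in `T₁`, then
in `T₂` no two of `v_A, v_B, v_C` are path-connected and either there is a non-trivial path
`v_{B,C} ⇝ v_{A,B}` in `T₂` or `v_{A,B} = v_{A,C} = v_{B,C}` in `T₂`. -/
theorem stmt19 {α V W : Type} (T₁ : PreTree α V) (T₂ : PreTree α W)
    (h₁ : T₁.IsATree) (h₂ : T₂.IsATree)
    (hlc : PreTree.LocallyCompatible T₁ T₂)
    (a b c : α) (va vb vc : V) (va' vb' vc' : W)
    (ha : T₁.label va = some a) (hb : T₁.label vb = some b) (hc : T₁.label vc = some c)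
    (ha' : T₂.label va' = some a) (hb' : T₂.label vb' = some b) (hc' : T₂.label vc' = some c)
    (hab : ¬ T₁.path va vb) (hba : ¬ T₁.path vb va)
    (hac : ¬ T₁.path va vc) (hca : ¬ T₁.path vc va)
    (hbc : ¬ T₁.path vb vc) (hcb : ¬ T₁.path vc vb)
    (mbc mab : V)
    (hmbc : PreTree.IsMRCA T₁ vb vc mbc) (hmab : PreTree.IsMRCA T₁ va vb mab)
    (hnt : T₁.pathNT mbc mab) :
    (¬ T₂.path va' vb' ∧ ¬ T₂.path vb' va' ∧
     ¬ T₂.path va' vc' ∧ ¬ T₂.path vc' va' ∧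
     ¬ T₂.path vb' vc' ∧ ¬ T₂.path vc' vb') ∧
    (∀ mab' mac' mbc' : W,
        PreTree.IsMRCA T₂ va' vb' mab' → PreTree.IsMRCA T₂ va' vc' mac' →
        PreTree.IsMRCA T₂ vb' vc' mbc' →
        (T₂.pathNT mbc' mab' ∨ (mab' = mac' ∧ mac' = mbc'))) := by
  classical
  have fact1 : ¬ T₂.path va' vb' := fun h => hab ((hlc.1 a b va vb va' vb' ha hb ha' hb').mpr h)
  have fact2 : ¬ T₂.path vb' va' := fun h => hba ((hlc.1 b a vb va vb' va' hb ha hb' ha').mpr h)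
  have fact3 : ¬ T₂.path va' vc' := fun h => hac ((hlc.1 a c va vc va' vc' ha hc ha' hc').mpr h)
  have fact4 : ¬ T₂.path vc' va' := fun h => hca ((hlc.1 c a vc va vc' va' hc ha hc' ha').mpr h)
  have fact5 : ¬ T₂.path vb' vc' := fun h => hbc ((hlc.1 b c vb vc vb' vc' hb hc hb' hc').mpr h)
  have fact6 : ¬ T₂.path vc' vb' := fun h => hcb ((hlc.1 c b vc vb vc' vb' hc hb hc' hb').mpr h)
  refine ⟨⟨fact1, fact2, fact3, fact4, fact5, fact6⟩, ?_⟩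
  intro mab' mac' mbc' hmab' hmac' hmbc'
  -- In T₁, mbc is also the MRCA of va and vc
  have hpath_mbc_mab : T₁.path mbc mab := hnt.to_reflTransGen
  have hmac1 : T₁.IsMRCA va vc mbc := by
    refine ⟨hpath_mbc_mab.trans hmab.1, hmbc.2.1, ?_⟩
    intro n hna hnc
    rcases PreTree.aux_path_comparable h₁ hmab.1 n hna with hmn | hnm
    · -- path mab n : then mab is a common ancestor of vb and vc
      have : T₁.path mab mbc := hmbc.2.2 mab hmab.2.1 (hmn.trans hnc)
      exact absurd (PreTree.aux_pathNT_irrefl h₁ (α := α))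
        (fun h => h (hnt.trans_right this))
    · exact (hnm.trans hmab.2.1) |> fun hnb => hmbc.2.2 n hnb hnc
  -- K1 : ¬ pathNT mab' mbc'  (from C2 with labels (a,b,c))
  have K1 : ¬ T₂.pathNT mab' mbc' :=
    hlc.2 a b c va vb vc mbc mab va' vb' vc' mab' mbc'
      ha hb hc ha' hb' hc' hmbc hmab hmab' hmbc' hnt
  -- K2 : ¬ pathNT mab' mac'  (from C2 with labels (b,a,c))
  have K2 : ¬ T₂.pathNT mab' mac' :=
    hlc.2 b a c vb va vc mbc mab vb' va' vc' mab' mac'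
      hb ha hc hb' ha' hc' hmac1 (PreTree.aux_mrca_symm hmab)
      (PreTree.aux_mrca_symm hmab') hmac' hnt
  -- mab' and mbc' are comparable (both ancestors of vb')
  rcases PreTree.aux_path_comparable h₂ hmab'.2.1 mbc' hmbc'.1 with hcmp | hcmp
  · -- path mab' mbc'
    rcases hcmp.cases_head with heq | ⟨w, harc, hw⟩
    · -- mab' = mbc'
      subst heq
      have hm_anc_c : T₂.path mab' vc' := hmbc'.2.1
      have hm_mac : T₂.path mab' mac' := hmac'.2.2 mab' hmab'.1 hm_anc_c
      rcases hm_mac.cases_head with heq2 | ⟨w, harc, hw⟩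
      · exact Or.inr ⟨heq2, heq2.symm⟩
      · exact absurd (Relation.TransGen.head' harc hw) K2
    · exact absurd (Relation.TransGen.head' harc hw) K1
  · -- path mbc' mab'
    rcases hcmp.cases_head with heq | ⟨w, harc, hw⟩
    · -- mbc' = mab'
      subst heq
      have hm_anc_c : T₂.path mbc' vc' := hmbc'.2.1
      have hm_mac : T₂.path mbc' mac' := hmac'.2.2 mbc' hmab'.1 hm_anc_c
      rcases hm_mac.cases_head with heq2 | ⟨w, harc, hw⟩
      · exact Or.inr ⟨heq2, heq2.symm⟩
      · exact absurd (Relation.TransGen.head' harc hw) K2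
    · exact Or.inl (Relation.TransGen.head' harc hw)
end
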